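/- arXiv:1510.04649 — 5 statements merged into one kernel-verified Lean document; each statement's English description precedes it below -/
import Mathlib

section
/- Let A be a countably infinite alphabet and let Σ_A be the Ott–Tomforde–Willis full shift, i.e. the set of all finite sequences over A (including the empty sequence Ø) together with all infinite sequences over A, with topology generated by the generalized cylinder sets Z(x,F) = {y ∈ Σ_A : y_i = x_i for i ≤ |x|, y_{|x|+1} ∉ F} for finite words x and finite sets F ⊆ A. Then every generalized cylinder set Z(x,F) is compact and open in Σ_A. -/
namespace OTW

/-- The Ott–Tomforde–Willis full shift over `A`, modelled as the set of "gap-free"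
functions `ℕ → Option A`: finite words are eventually `none`, infinite sequences never. -/
def FullShift (A : Type*) : Set (ℕ → Option A) :=
  {x | ∀ n, x n = none → x (n + 1) = none}

variable {A : Type*}

/-- The finite word `l` as an element of the full shift. -/
def ofList (l : List A) : ℕ → Option A :=
  fun n => if h : n < l.length then some (l.get ⟨n, h⟩) else none

theorem ofList_mem (l : List A) : ofList l ∈ FullShift A := by
  intro n hn
  by_cases h : n < l.length
  · simp [ofList, h] at hn
  · simp only [ofList]
    rw [dif_neg (by omega)]

/-- The infinite sequence `y` as an element of the full shift. -/
def ofSeq (y : ℕ → A) : ℕ → Option A := fun n => some (y n)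

theorem ofSeq_mem (y : ℕ → A) : ofSeq y ∈ FullShift A := by
  intro n hn
  simp [ofSeq] at hn

/-- Truncation of `x` to its first `p` letters. -/
def trunc (p : ℕ) (x : ℕ → Option A) : ℕ → Option A := fun n => if n < p then x n else none

theorem trunc_mem {x : ℕ → Option A} (hx : x ∈ FullShift A) (p : ℕ) :
    trunc p x ∈ FullShift A := by
  intro n hn
  simp only [trunc] at hn ⊢
  by_cases h : n + 1 < p
  · rw [if_pos h]
    rw [if_pos (by omega)] at hn
    exact hx n hn
  · rw [if_neg h]

/-- Generalized cylinder set `Z(w, F)`: sequences extending the finite word `w` whose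
next letter (if any) is not in the finite set `F`. -/
def Cyl (w : List A) (F : Finset A) : Set (ℕ → Option A) :=
  {x | (∀ i (h : i < w.length), x i = some (w.get ⟨i, h⟩)) ∧ ∀ a ∈ F, x w.length ≠ some a}

/-- The topology on the full shift generated by the generalized cylinder sets. -/
instance instTopoFullShift (A : Type*) : TopologicalSpace ↥(FullShift A) :=
  TopologicalSpace.generateFrom {S | ∃ w F, S = Subtype.val ⁻¹' Cyl w F}

/-- The shift map on the full shift. -/
def shiftMap (x : ↥(FullShift A)) : ↥(FullShift A) :=
  ⟨fun n => x.1 (n + 1), fun n hn => x.2 (n + 1) hn⟩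

/-- The length of an element of the full shift, valued in `ℕ∞`. -/
noncomputable def len (x : ℕ → Option A) : ℕ∞ := ⨅ n ∈ {n | x n = none}, (n : ℕ∞)

/-- `x` is an infinite sequence. -/
def IsInf (x : ℕ → Option A) : Prop := ∀ n, x n ≠ none

/-- The word `w` occurs in `x` at position `k`. -/
def hasBlockAt (x : ℕ → Option A) (w : List A) (k : ℕ) : Prop :=
  ∀ i (h : i < w.length), x (k + i) = some (w.get ⟨i, h⟩)

/-- `X_F^inf` : infinite sequences avoiding all blocks from `F`. -/
def XFinf (F : Set (List A)) : Set (ℕ → Option A) :=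
  {x | IsInf x ∧ ∀ w ∈ F, ∀ k, ¬ hasBlockAt x w k}

/-- Concatenation of a finite word with an infinite sequence. -/
def listCat (w : List A) (y : ℕ → A) : ℕ → Option A :=
  fun n => if h : n < w.length then some (w.get ⟨n, h⟩) else some (y (n - w.length))

/-- `X_F^fin` : finite words admitting infinitely many one-letter extensions to
elements of `X_F^inf`. -/
def XFfin (F : Set (List A)) : Set (ℕ → Option A) :=
  {x | ∃ w : List A, x = ofList w ∧
    {a : A | ∃ y : ℕ → A, listCat (w ++ [a]) y ∈ XFinf F}.Infinite}

/-- The shift space `X_F` determined by the forbidden words `F`. -/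
def XF (F : Set (List A)) : Set (ℕ → Option A) := XFinf F ∪ XFfin F

/-- An ultragraph: sources are vertices, ranges are sets of vertices. -/
structure Ultragraph (V E : Type*) where
  s : E → V
  r : E → Set V

/-- The set of infinite paths of an ultragraph. -/
def Ginf {V E : Type*} (G : Ultragraph V E) : Set (ℕ → Option E) :=
  {x | IsInf x ∧ ∀ n e f, x n = some e → x (n + 1) = some f → G.s f ∈ G.r e}

/-- The edge shift of an ultragraph: the closure of the set of infinite paths. -/
def edgeShift {V E : Type*} (G : Ultragraph V E) : Set ↥(FullShift E) :=
  closure {x : ↥(FullShift E) | x.1 ∈ Ginf G}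

/-- A (nonempty) finite path in an ultragraph. -/
def IsPath {V E : Type*} (G : Ultragraph V E) (l : List E) : Prop :=
  l ≠ [] ∧ l.Chain' (fun e f => G.s f ∈ G.r e)

/-- A directed graph. -/
structure DirGraph (V E : Type*) where
  s : E → V
  r : E → V

/-- A directed graph viewed as an ultragraph. -/
def DirGraph.toUltragraph {V E : Type*} (G : DirGraph V E) : Ultragraph V E :=
  ⟨G.s, fun e => {G.r e}⟩

/-- The length-one word `e` as an element of the full shift. -/
def word1 (e : A) : ↥(FullShift A) := ⟨ofList [e], ofList_mem _⟩

/-- A conjugacy between shift spaces: a length-preserving, shift-commuting, continuous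
bijection (between shift-invariant subsets). -/
structure IsConjugacy {A B : Type*} (X : Set ↥(FullShift A)) (Y : Set ↥(FullShift B))
    (φ : ↥X → ↥Y) : Prop where
  shiftInvX : ∀ x : ↥X, shiftMap x.1 ∈ X
  shiftInvY : ∀ y : ↥Y, shiftMap y.1 ∈ Y
  bijective : Function.Bijective φ
  continuous : Continuous φ
  shift_comm : ∀ x : ↥X, (φ ⟨shiftMap x.1, shiftInvX x⟩).1 = shiftMap (φ x).1
  len_eq : ∀ x : ↥X, len (φ x).1.1 = len x.1.1

/-- An eventually finite periodic conjugacy: for some `p ≥ 2`, the initial block of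
length `p` of every `p`-periodic point is mapped to the initial block of length `p`
of its image. -/
def EvFinPeriodic {A B : Type*} {X : Set ↥(FullShift A)} {Y : Set ↥(FullShift B)}
    (φ : ↥X → ↥Y) : Prop :=
  ∃ p : ℕ, 2 ≤ p ∧ ∀ x : ↥X, IsInf x.1.1 → (∀ k, x.1.1 (k + p) = x.1.1 k) →
    ∀ h : (⟨trunc p x.1.1, trunc_mem x.1.2 p⟩ : ↥(FullShift A)) ∈ X,
      ∀ i < p, (φ ⟨⟨trunc p x.1.1, trunc_mem x.1.2 p⟩, h⟩).1.1 i = (φ x).1.1 i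

/-- The range of a finite path (`univ` for the empty path). -/
def rng {V E : Type*} (G : Ultragraph V E) (l : List E) : Set V :=
  (l.getLast?.map G.r).getD Set.univ

/-- The set `X_{ab⁻¹}` of the partial action: elements of the edge shift beginning
with `a` whose next edge (if any) has source in `r(a) ∩ r(b)`. -/
def XwS {V E : Type*} (G : Ultragraph V E) (a b : List E) : Set ↥(FullShift E) :=
  {x | x ∈ edgeShift G ∧ (∀ i (h : i < a.length), x.1 i = some (a.get ⟨i, h⟩)) ∧
    ∀ e, x.1 a.length = some e → G.s e ∈ rng G a ∩ rng G b}

/-- The map `θ_{ba⁻¹}` (raw version): replaces the initial block `a` by `b`. -/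
def theta {E : Type*} (a b : List E) (x : ℕ → Option E) : ℕ → Option E :=
  fun n => if h : n < b.length then some (b.get ⟨n, h⟩) else x (n - b.length + a.length)

theorem theta_mem {E : Type*} {x : ℕ → Option E} (hx : x ∈ FullShift E) (a b : List E) :
    theta a b x ∈ FullShift E := by
  intro n hn
  simp only [theta] at hn ⊢
  split at hn
  · simp at hn
  · rename_i h
    rw [dif_neg (by omega)]
    have h2 : n + 1 - b.length + a.length = (n - b.length + a.length) + 1 := by omega
    rw [h2]
    exact hx _ hn

/-- The map `θ_{ba⁻¹}` as a self-map of the full shift. -/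
def thetaF {E : Type*} (a b : List E) (x : ↥(FullShift E)) : ↥(FullShift E) :=
  ⟨theta a b x.1, theta_mem x.2 a b⟩

/-- A valid pair `(a, b)` representing the reduced group element `ab⁻¹` of the set `V`. -/
def ValidPair {V E : Type*} (G : Ultragraph V E) (a b : List E) : Prop :=
  (a = [] ∨ IsPath G a) ∧ (b = [] ∨ IsPath G b) ∧ (rng G a ∩ rng G b).Nonempty ∧
  ∀ (ha : a ≠ []) (hb : b ≠ []), a.getLast ha ≠ b.getLast hb

/-- The element `ab⁻¹` of the free group on the edges. -/
def pf {E : Type*} (a b : List E) : FreeGroup E :=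
  (a.map FreeGroup.of).prod * ((b.map FreeGroup.of).prod)⁻¹


theorem none_mono {x : ℕ → Option A} (hx : x ∈ FullShift A) {i n : ℕ} (hin : i ≤ n)
    (h : x i = none) : x n = none := by
  induction n with
  | zero => obtain rfl := Nat.le_zero.mp hin; exact h
  | succ n ih =>
    rcases eq_or_lt_of_le hin with rfl | h'
    · exact h
    · exact hx n (ih (Nat.lt_succ_iff.mp h'))

open scoped Classical in
noncomputable def cut (y : ℕ → Option A) : ℕ → Option A :=
  fun n => if ∀ i ≤ n, y i ≠ none then y n else none

theorem cut_mem (y : ℕ → Option A) : cut y ∈ FullShift A := by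
  intro n hn
  simp only [cut] at hn ⊢
  split at hn
  · rename_i h; exact absurd hn (h n le_rfl)
  · rename_i h
    rw [if_neg]
    intro h'
    exact h fun i hi => h' i (hi.trans (Nat.le_succ n))

theorem cut_eq_self {x : ℕ → Option A} (hx : x ∈ FullShift A) : cut x = x := by
  funext n
  simp only [cut]
  split
  · rfl
  · rename_i h
    push_neg at h
    obtain ⟨i, hi, hnone⟩ := h
    exact (none_mono hx hi hnone).symm

theorem cut_mem_cyl_iff (y : ℕ → Option A) (w : List A) (F : Finset A) :
    cut y ∈ Cyl w F ↔
      (∀ i (h : i < w.length), y i = some (w.get ⟨i, h⟩)) ∧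
        ∀ a ∈ F, y w.length ≠ some a := by
  classical
  have hcases : ∀ n, cut y n = y n ∨ cut y n = none := by
    intro n; simp only [cut]; split <;> simp
  constructor
  · rintro ⟨h1, h2⟩
    have hy1 : ∀ i (h : i < w.length), y i = some (w.get ⟨i, h⟩) := by
      intro i h
      rcases hcases i with hc | hc
      · rw [← hc]; exact h1 i h
      · exact absurd ((h1 i h).symm.trans hc) (by simp)
    refine ⟨hy1, fun a ha hya => ?_⟩
    have hall : ∀ i ≤ w.length, y i ≠ none := by
      intro i hi
      rcases eq_or_lt_of_le hi with rfl | hi'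
      · simp [hya]
      · simp [hy1 i hi']
    have : cut y w.length = y w.length := by simp only [cut]; rw [if_pos hall]
    exact h2 a ha (this.trans hya)
  · rintro ⟨h1, h2⟩
    constructor
    · intro i h
      have hall : ∀ j ≤ i, y j ≠ none := fun j hj => by
        simp [h1 j (lt_of_le_of_lt hj h)]
      simp only [cut]; rw [if_pos hall]; exact h1 i h
    · intro a ha
      rcases hcases w.length with hc | hc
      · rw [hc]; exact h2 a ha
      · simp [hc]


/-- every generalized cylinder set is compact and open in the OTW full
shift over a countably infinite alphabet. -/
theorem cylinder_isCompact_isOpen (A : Type*) [Countable A] [Infinite A]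
    (w : List A) (F : Finset A) :
    IsCompact (Subtype.val ⁻¹' Cyl w F : Set ↥(FullShift A)) ∧
    IsOpen (Subtype.val ⁻¹' Cyl w F : Set ↥(FullShift A)) := by
  classical
  refine ⟨?_, TopologicalSpace.isOpen_generateFrom_of_mem ⟨w, F, rfl⟩⟩
  letI : TopologicalSpace A := ⊥
  haveI : DiscreteTopology A := ⟨rfl⟩
  have hsome_closed : ∀ c : A, IsClosed ({some c} : Set (OnePoint A)) :=
    fun c => isClosed_singleton
  have hsome_open : ∀ c : A, IsOpen ({some c} : Set (OnePoint A)) := fun c => by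
    have := (OnePoint.isOpenEmbedding_coe (X := A)).isOpenMap {c} (isOpen_discrete _)
    simp at this; exact this
  -- the condition set, in the compact product space
  let Kset : List A → Finset A → Set (ℕ → OnePoint A) := fun w' F' =>
    {y | (∀ i (h : i < w'.length), y i = some (w'.get ⟨i, h⟩)) ∧
      ∀ a ∈ F', y w'.length ≠ some a}
  have hKeq : ∀ w' F', Kset w' F' =
      (⋂ i : Fin w'.length, (fun y : ℕ → OnePoint A => y i) ⁻¹' {some (w'.get i)}) ∩
        ⋂ a ∈ F', (fun y : ℕ → OnePoint A => y w'.length) ⁻¹' {some a}ᶜ := by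
    intro w' F'
    ext y
    simp only [Kset, Set.mem_setOf_eq, Set.mem_inter_iff, Set.mem_iInter,
      Set.mem_preimage, Set.mem_singleton_iff, Set.mem_compl_iff]
    constructor
    · rintro ⟨h1, h2⟩
      exact ⟨fun i => h1 i i.2, h2⟩
    · rintro ⟨h1, h2⟩
      exact ⟨fun i h => h1 ⟨i, h⟩, h2⟩
  have hKclosed : IsClosed (Kset w F) := by
    rw [hKeq]
    refine IsClosed.inter (isClosed_iInter fun i => ?_) (isClosed_biInter fun a _ => ?_)
    · exact (hsome_closed _).preimage (continuous_apply _)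
    · exact ((hsome_open a).isClosed_compl).preimage (continuous_apply _)
  have hKopen : ∀ w' F', IsOpen (Kset w' F') := by
    intro w' F'
    rw [hKeq]
    refine IsOpen.inter (isOpen_iInter_of_finite fun i => ?_)
      (isOpen_biInter_finset fun a _ => ?_)
    · exact (hsome_open _).preimage (continuous_apply _)
    · exact ((hsome_closed a).isOpen_compl).preimage (continuous_apply _)
  let G : (ℕ → OnePoint A) → ↥(FullShift A) := fun y => ⟨cut y, cut_mem y⟩
  have hGcont : Continuous G := by
    refine continuous_generateFrom_iff.mpr ?_
    rintro s ⟨w', F', rfl⟩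
    have : G ⁻¹' (Subtype.val ⁻¹' Cyl w' F') = Kset w' F' := by
      ext y
      exact cut_mem_cyl_iff y w' F'
    rw [this]
    exact hKopen w' F'
  have himg : G '' Kset w F = (Subtype.val ⁻¹' Cyl w F) := by
    ext x
    constructor
    · rintro ⟨y, hy, rfl⟩
      exact (cut_mem_cyl_iff y w F).mpr hy
    · intro hx
      exact ⟨x.1, ⟨hx.1, hx.2⟩, Subtype.ext (cut_eq_self x.2)⟩
  rw [← himg]
  exact hKclosed.isCompact.image hGcont


end OTW
end

section
/- The Ott–Tomforde–Willis full shift Σ_A over a countably infinite alphabet A is a compact topological space. -/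
namespace OTW

variable {A : Type*}

/-- the OTW full shift over a countably infinite alphabet is compact. -/
theorem fullShift_compactSpace (A : Type*) [Countable A] [Infinite A] :
    CompactSpace ↥(FullShift A) := by
  classical
  rw [← isCompact_univ_iff, isCompact_iff_ultrafilter_le_nhds]
  intro f _
  set S : ℕ → A → Set ↥(FullShift A) := fun n a => {y | y.1 n = some a} with hS
  set g : ℕ → Option A := fun n =>
    if h : ∃ a, S n a ∈ f then some h.choose else none with hgdef
  have hg_some : ∀ n a, g n = some a → S n a ∈ f := by
    intro n a h
    simp only [hgdef] at h
    split at h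
    · rename_i h'
      obtain rfl : h'.choose = a := by injection h
      exact h'.choose_spec
    · exact absurd h (by simp)
  have hg_none : ∀ n, g n = none → ∀ a, S n a ∉ f := by
    intro n h a
    simp only [hgdef] at h
    split at h
    · simp at h
    · rename_i h'; exact fun hc => h' ⟨a, hc⟩
  set z : ℕ → Option A := fun n => if ∀ i ≤ n, (g i).isSome then g n else none with hzdef
  have hz : z ∈ FullShift A := by
    intro n hn
    simp only [hzdef] at hn ⊢
    split at hn
    · rename_i h
      have := h n le_rfl
      rw [hn] at this; simp at this
    · rename_i h
      rw [if_neg]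
      intro h'
      exact h fun i hi => h' i (by omega)
  have hz_some : ∀ n a, z n = some a → g n = some a := by
    intro n a h
    simp only [hzdef] at h
    split at h
    · exact h
    · exact absurd h (by simp)
  refine ⟨⟨z, hz⟩, Set.mem_univ _, ?_⟩
  have hn : (nhds (⟨z, hz⟩ : ↥(FullShift A))) =
      ⨅ s ∈ {s | (⟨z, hz⟩ : ↥(FullShift A)) ∈ s ∧
        s ∈ {S | ∃ w F, S = Subtype.val ⁻¹' Cyl w F}}, Filter.principal s :=
    TopologicalSpace.nhds_generateFrom
  rw [hn, le_iInf₂_iff]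
  rintro s ⟨hzs, w, F, rfl⟩
  rw [Filter.le_principal_iff]
  simp only [Set.mem_preimage, Cyl, Set.mem_setOf_eq] at hzs
  have h1 : (⋂ i : Fin w.length, S i (w.get i)) ∈ f := by
    rw [← Ultrafilter.mem_coe, Filter.iInter_mem]
    intro i
    exact hg_some _ _ (hz_some _ _ (hzs.1 i i.2))
  rcases hzm : z w.length with _ | a₀
  · -- `z` ends exactly at position `w.length` : then `g w.length = none`.
    have hall : ∀ i, i < w.length → (g i).isSome := by
      intro i hi
      rw [hz_some _ _ (hzs.1 i hi)]; rfl
    have hgm : g w.length = none := by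
      by_contra hc
      have hgs : (g w.length).isSome := Option.ne_none_iff_isSome.mp hc
      have : z w.length = g w.length := by
        simp only [hzdef]
        rw [if_pos]
        intro i hi
        rcases Nat.lt_or_ge i w.length with h' | h'
        · exact hall i h'
        · have : i = w.length := by omega
          rw [this]; exact hgs
      rw [hzm] at this
      exact hc this.symm
    have h2 : (⋂ a ∈ F, (S w.length a)ᶜ) ∈ f := by
      rw [← Ultrafilter.mem_coe, Filter.biInter_finset_mem]
      intro a _
      exact Ultrafilter.compl_mem_iff_notMem.2 (hg_none _ hgm a)
    refine Filter.mem_of_superset (Filter.inter_mem h1 h2) ?_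
    rintro y ⟨hy1, hy2⟩
    simp only [Set.mem_iInter] at hy1 hy2
    refine ⟨fun i h => hy1 ⟨i, h⟩, fun a ha => ?_⟩
    exact hy2 a ha
  · -- `z` has a letter `a₀` at position `w.length`, and `a₀ ∉ F`.
    have ha₀F : a₀ ∉ F := fun h => hzs.2 a₀ h hzm
    have h2 : S w.length a₀ ∈ f := hg_some _ _ (hz_some _ _ hzm)
    refine Filter.mem_of_superset (Filter.inter_mem h1 h2) ?_
    rintro y ⟨hy1, hy2⟩
    simp only [Set.mem_iInter] at hy1
    refine ⟨fun i h => hy1 ⟨i, h⟩, fun a ha hya => ?_⟩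
    have : y.1 w.length = some a₀ := hy2
    rw [hya] at this
    exact ha₀F (by injection this with h; exact h ▸ ha)

end OTW
end

section
/- Every 1-step shift space over a countably infinite alphabet is the edge shift of some ultragraph. Precisely: let A be a countable alphabet and F ⊆ A² a set of words of length 2, and let X_F be the associated shift space in Σ_A. Define the ultragraph G with G⁰ = {v_a : a ∈ A}, G¹ = A, s(a) = v_a and r(a) = {v_b : ab ∉ F}. Then the set of infinite paths of G equals X_F^inf, and hence the closure of G^∞ in Σ_A equals X_F. -/
namespace OTW

variable {A : Type*}

section Aux

variable {A : Type*}

lemma listCat_mem_fullShift (w : List A) (y : ℕ → A) : listCat w y ∈ FullShift A := by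
  intro n hn
  simp only [listCat] at hn
  split at hn <;> simp at hn

lemma listCat_isInf (w : List A) (y : ℕ → A) : IsInf (listCat w y) := by
  intro n
  simp only [listCat]
  split <;> simp

lemma fullShift_none_mono {x : ℕ → Option A} (hx : x ∈ FullShift A) {m n : ℕ}
    (h : x m = none) (hmn : m ≤ n) : x n = none := by
  induction n, hmn using Nat.le_induction with
  | base => exact h
  | succ n _ ih => exact hx n ih

lemma part1 (F : Set (A × A)) :
    Ginf (⟨id, fun a => {b | (a, b) ∉ F}⟩ : Ultragraph A A) =
      XFinf {w : List A | ∃ p ∈ F, w = [p.1, p.2]} := by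
  ext x
  constructor
  · rintro ⟨hinf, hpath⟩
    refine ⟨hinf, ?_⟩
    rintro w ⟨p, hp, rfl⟩ k hblk
    have h0 := hblk 0 (by norm_num)
    have h1 := hblk 1 (by norm_num)
    simp only [List.get_eq_getElem] at h0 h1
    simp only [List.getElem_cons_zero] at h0
    simp only [List.getElem_cons_succ, List.getElem_cons_zero] at h1
    rw [Nat.add_zero] at h0
    exact hpath k p.1 p.2 h0 h1 hp
  · rintro ⟨hinf, havoid⟩
    refine ⟨hinf, ?_⟩
    intro n e f he hf hmem
    exact havoid [e, f] ⟨(e, f), hmem, rfl⟩ n (by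
      intro i hi
      simp only [List.length_cons, List.length_nil] at hi
      interval_cases i
      · simpa using he
      · simpa using hf)

lemma isOpen_cyl (w : List A) (F : Finset A) :
    IsOpen (Subtype.val ⁻¹' Cyl w F : Set ↥(FullShift A)) :=
  TopologicalSpace.GenerateOpen.basic _ ⟨w, F, rfl⟩

open Topology in
lemma tendsto_of_forall_gen {ι : Type*} {l : Filter ι} {f : ι → ↥(FullShift A)}
    {x : ↥(FullShift A)}
    (h : ∀ (w : List A) (F : Finset A), x ∈ Subtype.val ⁻¹' Cyl w F →
      ∀ᶠ n in l, f n ∈ (Subtype.val ⁻¹' Cyl w F : Set ↥(FullShift A))) :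
    Filter.Tendsto f l (𝓝 x) := by
  rw [show (𝓝 x : Filter ↥(FullShift A)) =
      @nhds _ (TopologicalSpace.generateFrom {S | ∃ w F, S = Subtype.val ⁻¹' Cyl w F}) x
      from rfl, TopologicalSpace.nhds_generateFrom]
  simp only [Filter.tendsto_iInf, Filter.tendsto_principal]
  rintro s ⟨hxs, w, F, rfl⟩
  exact h w F hxs

lemma ofList_get {w : List A} {i : ℕ} (h : i < w.length) :
    ofList w i = some (w.get ⟨i, h⟩) := dif_pos h

lemma ofList_none {w : List A} {i : ℕ} (h : ¬ i < w.length) :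
    ofList w i = none := dif_neg h

lemma ofList_mem_cyl {w w' : List A} {F0 : Finset A} (h : ofList w ∈ Cyl w' F0) :
    w'.length ≤ w.length ∧
      ∀ i (h1 : i < w'.length), ∃ h2 : i < w.length, w'.get ⟨i, h1⟩ = w.get ⟨i, h2⟩ := by
  have key : ∀ i (h1 : i < w'.length), ∃ h2 : i < w.length, w'.get ⟨i, h1⟩ = w.get ⟨i, h2⟩ := by
    intro i h1
    have := h.1 i h1
    by_cases h2 : i < w.length
    · rw [ofList_get h2] at this
      exact ⟨h2, (Option.some_injective _ this).symm⟩
    · rw [ofList_none h2] at this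
      simp at this
  refine ⟨?_, key⟩
  by_contra hlen
  push_neg at hlen
  obtain ⟨h2, -⟩ := key w.length hlen
  omega

end Aux

/-- every 1-step shift is the edge shift of an ultragraph. -/
theorem one_step_is_ultragraph_edge_shift {A : Type*} [Countable A] (F : Set (A × A)) :
    Ginf (⟨id, fun a => {b | (a, b) ∉ F}⟩ : Ultragraph A A) =
      XFinf {w : List A | ∃ p ∈ F, w = [p.1, p.2]} ∧
    edgeShift (⟨id, fun a => {b | (a, b) ∉ F}⟩ : Ultragraph A A) =
      {x : ↥(FullShift A) | x.1 ∈ XF {w : List A | ∃ p ∈ F, w = [p.1, p.2]}} := by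
  classical
  have h1 := part1 F
  refine ⟨h1, ?_⟩
  set F' := {w : List A | ∃ p ∈ F, w = [p.1, p.2]} with hF'
  set G := (⟨id, fun a => {b | (a, b) ∉ F}⟩ : Ultragraph A A) with hG
  ext x
  simp only [edgeShift, Set.mem_setOf_eq]
  constructor
  · intro hx
    by_cases hI : IsInf x.1
    · -- infinite case: x.1 ∈ XFinf F'
      left
      refine ⟨hI, ?_⟩
      rintro w ⟨p, hp, rfl⟩ k hblk
      have hk0 : x.1 k = some p.1 := by
        have := hblk 0 (by norm_num)
        simpa using this
      have hk1 : x.1 (k + 1) = some p.2 := by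
        have := hblk 1 (by norm_num)
        simpa using this
      -- build the cylinder through the first k+2 letters of x
      set w0 : List A := List.ofFn (fun i : Fin (k + 2) =>
        (x.1 i).get (Option.isSome_iff_ne_none.mpr (hI i))) with hw0
      have hw0len : w0.length = k + 2 := List.length_ofFn
      have hprefix : ∀ i (h : i < w0.length), x.1 i = some (w0.get ⟨i, h⟩) := by
        intro i h
        simp only [hw0, List.get_eq_getElem, List.getElem_ofFn, Option.some_get]
      have hxU : x ∈ (Subtype.val ⁻¹' Cyl w0 (∅ : Finset A) : Set ↥(FullShift A)) := by
        refine ⟨hprefix, ?_⟩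
        intro a ha
        simp at ha
      obtain ⟨y, hyU, hyG⟩ := mem_closure_iff.mp hx _ (isOpen_cyl w0 ∅) hxU
      have hyk0 : y.1 k = some p.1 := by
        rw [hyU.1 k (by omega)]
        rw [← hprefix k (by omega)]
        exact hk0
      have hyk1 : y.1 (k + 1) = some p.2 := by
        rw [hyU.1 (k + 1) (by omega)]
        rw [← hprefix (k + 1) (by omega)]
        exact hk1
      exact (hyG.2 k p.1 p.2 hyk0 hyk1) hp
    · -- finite case: x.1 ∈ XFfin F'
      right
      have hex : ∃ n, x.1 n = none := by
        by_contra hc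
        push_neg at hc
        exact hI hc
      set n0 := Nat.find hex with hn0
      have hmin : ∀ i, i < n0 → x.1 i ≠ none := fun i h => Nat.find_min hex h
      set w : List A := List.ofFn (fun i : Fin n0 =>
        (x.1 i).get (Option.isSome_iff_ne_none.mpr (hmin i i.2))) with hw
      have hwlen : w.length = n0 := List.length_ofFn
      have hxw : x.1 = ofList w := by
        funext n
        by_cases h : n < n0
        · rw [ofList_get (by omega)]
          simp only [hw, List.get_eq_getElem, List.getElem_ofFn, Option.some_get]
        · rw [ofList_none (by omega)]
          exact fullShift_none_mono x.2 (Nat.find_spec hex) (by omega)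
      refine ⟨w, hxw, ?_⟩
      by_contra hS
      rw [Set.not_infinite] at hS
      set F0 := hS.toFinset with hF0
      have hxU : x ∈ (Subtype.val ⁻¹' Cyl w F0 : Set ↥(FullShift A)) := by
        refine ⟨?_, ?_⟩
        · intro i h
          rw [hxw]
          exact ofList_get h
        · intro a _
          rw [hxw, ofList_none (lt_irrefl _)]
          simp
      obtain ⟨y, hyU, hyG⟩ := mem_closure_iff.mp hx _ (isOpen_cyl w F0) hxU
      have hyinf : IsInf y.1 := hyG.1
      set y' : ℕ → A := fun n => (y.1 n).get (Option.isSome_iff_ne_none.mpr (hyinf n)) with hy'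
      have hy'eq : ∀ n, y.1 n = some (y' n) := fun n => (Option.some_get _).symm
      set a : A := y' w.length with ha
      have hcat : listCat (w ++ [a]) (fun n => y' (w.length + 1 + n)) = y.1 := by
        funext n
        simp only [listCat, List.length_append, List.length_singleton]
        by_cases h : n < w.length + 1
        · rw [dif_pos h]
          by_cases h2 : n < w.length
          · rw [hyU.1 n h2]
            congr 1
            simp only [List.get_eq_getElem]
            exact List.getElem_append_left h2
          · have hn : n = w.length := by omega
            subst hn
            rw [hy'eq]
            congr 1
            simp only [List.get_eq_getElem]
            have : (w ++ [a])[w.length] = a := by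
              rw [List.getElem_append_right (le_refl _)]
              simp
            rw [this]
        · rw [dif_neg h]
          have : w.length + 1 + (n - (w.length + 1)) = n := by omega
          rw [this, ← hy'eq]
      have haS : a ∈ {b : A | ∃ y0 : ℕ → A, listCat (w ++ [b]) y0 ∈ XFinf F'} := by
        refine ⟨fun n => y' (w.length + 1 + n), ?_⟩
        rw [hcat, ← h1]
        exact hyG
      have haF0 : a ∈ F0 := by
        rw [hF0, Set.Finite.mem_toFinset]
        exact haS
      exact hyU.2 a haF0 (by rw [hy'eq w.length])
  · intro hx
    rcases hx with hinf | hfin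
    · exact subset_closure (by rw [Set.mem_setOf_eq, h1]; exact hinf)
    · obtain ⟨w, hxw, hS⟩ := hfin
      set emb := hS.natEmbedding with hemb
      set a : ℕ → A := fun n => (emb n).1 with haa
      have hainj : Function.Injective a :=
        fun m n h => emb.injective (Subtype.ext h)
      have haS : ∀ n, ∃ y0 : ℕ → A, listCat (w ++ [a n]) y0 ∈ XFinf F' := fun n => (emb n).2
      choose y hy using haS
      set z : ℕ → ↥(FullShift A) := fun n =>
        ⟨listCat (w ++ [a n]) (y n), listCat_mem_fullShift _ _⟩ with hz
      have hzG : ∀ n, z n ∈ {x : ↥(FullShift A) | x.1 ∈ Ginf G} := by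
        intro n
        rw [Set.mem_setOf_eq, h1]
        exact hy n
      refine mem_closure_of_tendsto (f := z) (b := Filter.cofinite) ?_
        (Filter.Eventually.of_forall hzG)
      apply tendsto_of_forall_gen
      intro w' F0 hxmem
      have hxmem' : ofList w ∈ Cyl w' F0 := by rw [← hxw]; exact hxmem
      obtain ⟨hlen, hget⟩ := ofList_mem_cyl hxmem'
      have hprefix : ∀ n, ∀ i (h : i < w'.length), (z n).1 i = some (w'.get ⟨i, h⟩) := by
        intro n i h
        have h2 : i < w.length := by omega
        simp only [hz, listCat]
        rw [dif_pos (by simp; omega)]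
        obtain ⟨h2', hgi⟩ := hget i h
        rw [hgi]
        congr 1
        simp only [List.get_eq_getElem]
        exact List.getElem_append_left h2
      rcases lt_or_eq_of_le hlen with hlt | heq
      · -- all n work
        apply Filter.Eventually.of_forall
        intro n
        refine ⟨hprefix n, ?_⟩
        intro b hb
        have hz1 : (z n).1 w'.length = some (w.get ⟨w'.length, hlt⟩) := by
          simp only [hz, listCat]
          rw [dif_pos (by simp; omega)]
          congr 1
          simp only [List.get_eq_getElem]
          exact List.getElem_append_left hlt
        rw [hz1]
        have := hxmem'.2 b hb
        rw [ofList_get hlt] at this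
        exact this
      · -- eventually a n ∉ F0
        have hev : ∀ᶠ n in Filter.cofinite, a n ∉ F0 := by
          rw [Filter.eventually_cofinite]
          have : {n : ℕ | ¬ a n ∉ F0} = a ⁻¹' (F0 : Set A) := by
            ext n; simp
          rw [this]
          exact (F0.finite_toSet).preimage hainj.injOn
        filter_upwards [hev] with n hn
        refine ⟨hprefix n, ?_⟩
        intro b hb
        have hz1 : (z n).1 w'.length = some (a n) := by
          simp only [hz, listCat]
          rw [heq, dif_pos (by simp)]
          congr 1
          simp only [List.get_eq_getElem]
          rw [List.getElem_append_right (le_refl _)]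
          simp
        rw [hz1]
        intro hcontr
        exact hn (by rw [Option.some_injective _ hcontr]; exact hb)

end OTW
end

section
/- Let G be an ultragraph in which every edge e has a non-sink vertex in r(e), and suppose G¹ is finite. Then G^∞ is closed in Σ_{G¹}, so the edge shift X_G equals G^∞. -/
namespace OTW

variable {A : Type*}

private lemma get_ofFn' {α : Type*} {m : ℕ} (f : Fin m → α) (i : ℕ)
    (hi : i < (List.ofFn f).length) :
    (List.ofFn f).get ⟨i, hi⟩ = f ⟨i, by simpa using hi⟩ := by
  simp [List.get_ofFn]

/-- for an ultragraph with finitely many edges in which every range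
contains a non-sink, the set of infinite paths is closed, and equals the edge shift. -/
theorem edgeShift_eq_of_finite {V E : Type*} [Countable V] [Finite E]
    (G : Ultragraph V E) (h : ∀ e : E, ∃ v ∈ G.r e, ∃ f, G.s f = v) :
    IsClosed {x : ↥(FullShift E) | x.1 ∈ Ginf G} ∧
    edgeShift G = {x : ↥(FullShift E) | x.1 ∈ Ginf G} := by
  classical
  have := Fintype.ofFinite E
  have hbasic : ∀ (w : List E) (F : Finset E),
      IsOpen (Subtype.val ⁻¹' Cyl w F : Set ↥(FullShift E)) := by
    intro w F
    exact TopologicalSpace.GenerateOpen.basic _ ⟨w, F, rfl⟩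
  have hclosed : IsClosed {x : ↥(FullShift E) | x.1 ∈ Ginf G} := by
    rw [← isOpen_compl_iff, isOpen_iff_forall_mem_open]
    rintro ⟨x, hxf⟩ hxc
    simp only [Set.mem_compl_iff, Set.mem_setOf_eq] at hxc
    by_cases hinf : IsInf x
    · have hP : ¬ ∀ n e f, x n = some e → x (n + 1) = some f → G.s f ∈ G.r e := by
        intro p; exact hxc ⟨hinf, p⟩
      push_neg at hP
      obtain ⟨n, e, f, he, hf, hv⟩ := hP
      have hsome : ∀ i, (x i).isSome := by
        intro i
        cases hxi : x i with
        | none => exact absurd hxi (hinf i)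
        | some a => simp
      set w : List E := List.ofFn (fun i : Fin (n + 2) => (x i).get (hsome i)) with hw
      have hwlen : w.length = n + 2 := by simp [hw]
      refine ⟨Subtype.val ⁻¹' Cyl w ∅, ?_, hbasic w ∅, ?_⟩
      · rintro ⟨y, hyf⟩ ⟨hy1, _⟩
        simp only [Set.mem_compl_iff, Set.mem_setOf_eq]
        intro ⟨_, hy⟩
        have hge : ∀ i (hi : i < n + 2), y i = x i := by
          intro i hi
          have h1 : y i = some (w.get ⟨i, by omega⟩) := hy1 i (by omega)
          have h2 : w.get ⟨i, by omega⟩ = (x i).get (hsome i) := by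
            exact get_ofFn' _ i _
          rw [h1, h2, Option.some_get]
        have h1 : y n = some e := by rw [hge n (by omega)]; exact he
        have h2 : y (n + 1) = some f := by rw [hge (n + 1) (by omega)]; exact hf
        exact hv (hy n e f h1 h2)
      · refine ⟨?_, by simp [Cyl]⟩
        intro i hi
        show x i = some (w.get ⟨i, hi⟩)
        have h2 : w.get ⟨i, hi⟩ = (x i).get (hsome i) := get_ofFn' _ i _
        rw [h2, Option.some_get]
    · simp only [IsInf] at hinf
      push_neg at hinf
      have hex : ∃ n, x n = none := by
        obtain ⟨n, hn⟩ := hinf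
        exact ⟨n, by simpa using hn⟩
      set m := Nat.find hex with hm
      have hmnone : x m = none := Nat.find_spec hex
      have hsome : ∀ i, i < m → (x i).isSome := by
        intro i hi
        cases hxi : x i with
        | none => exact absurd hxi (Nat.find_min hex hi)
        | some a => simp
      set w : List E := List.ofFn (fun i : Fin m => (x i).get (hsome i i.2)) with hw
      have hwlen : w.length = m := by simp [hw]
      refine ⟨Subtype.val ⁻¹' Cyl w Finset.univ, ?_, hbasic w Finset.univ, ?_⟩
      · rintro ⟨y, hyf⟩ ⟨_, hy2⟩
        simp only [Set.mem_compl_iff, Set.mem_setOf_eq]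
        intro ⟨hyinf, _⟩
        have : y w.length = none := by
          cases hyw : y w.length with
          | none => rfl
          | some a => exact absurd hyw (hy2 a (Finset.mem_univ a))
        exact hyinf w.length this
      · constructor
        · intro i hi
          show x i = some (w.get ⟨i, hi⟩)
          have h2 : w.get ⟨i, hi⟩ = (x i).get (hsome i (by simp [hw] at hi; omega)) :=
            get_ofFn' _ i _
          rw [h2, Option.some_get]
        · intro a _
          show x w.length ≠ some a
          rw [hwlen, hmnone]
          simp
  exact ⟨hclosed, hclosed.closure_eq⟩

end OTW
end

section
/- Let X ⊆ Σ_A be a shift of finite type over a countably infinite alphabet A and suppose φ : X → Y_E is a conjugacy onto the edge shift of a directed graph E. Then all edges of E appearing as length-one elements of Y_E have the same range: for any e, f ∈ E¹ with e, f ∈ Y_E (as words of length one), r(e) = r(f). -/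
namespace OTW

variable {A : Type*}

section AuxProof

variable {A : Type*}

/-- The point `b c c c ⋯`. -/
def zraw (b c : A) : ℕ → Option A := fun n => if n = 0 then some b else some c

theorem zraw_mem (b c : A) : zraw b c ∈ FullShift A := by
  intro n hn
  by_cases h : n = 0 <;> simp [zraw, h] at hn

theorem zraw_isInf (b c : A) : IsInf (zraw b c) := by
  intro n hn
  by_cases h : n = 0 <;> simp [zraw, h] at hn

theorem ofList_single_zero (b : A) : ofList [b] 0 = some b := by simp [ofList]

theorem ofList_single_succ (b : A) (n : ℕ) : ofList [b] (n + 1) = none := by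
  simp [ofList]

theorem ofList_injective : Function.Injective (ofList (A := A)) := by
  intro l m h
  have hiff : ∀ n, n < l.length ↔ n < m.length := by
    intro n
    constructor <;> intro hn <;> by_contra h2 <;> have h3 := congrFun h n <;>
      simp [ofList, hn, h2] at h3
  have hlen : l.length = m.length := by
    rcases Nat.lt_trichotomy l.length m.length with h1 | h1 | h1
    · exact absurd ((hiff l.length).2 h1) (lt_irrefl _)
    · exact h1
    · exact absurd ((hiff m.length).1 h1) (lt_irrefl _)
  apply List.ext_get hlen
  intro n h1 h2
  have h3 := congrFun h n
  simp only [ofList, dif_pos h1, dif_pos h2, Option.some.injEq] at h3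
  exact h3

theorem len_le_of_none {x : ℕ → Option A} {n : ℕ} (h : x n = none) : len x ≤ (n : ℕ∞) :=
  le_trans (iInf_le _ n) (iInf_le _ h)

theorem le_len {x : ℕ → Option A} {m : ℕ∞} (h : ∀ n, x n = none → m ≤ (n : ℕ∞)) :
    m ≤ len x :=
  le_iInf fun n => le_iInf fun hn => h n hn

theorem len_eq_top_iff {x : ℕ → Option A} : len x = ⊤ ↔ IsInf x := by
  constructor
  · intro h n hn
    have h2 : len x ≤ ((n : ℕ) : ℕ∞) := len_le_of_none hn
    rw [h] at h2
    exact (ENat.coe_ne_top n) (top_le_iff.1 h2)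
  · intro h
    have hempty : {n | x n = none} = ∅ := by
      ext n; simp [h n]
    simp [len, hempty]

theorem len_ofList_single (b : A) : len (ofList [b]) = 1 := by
  apply le_antisymm
  · simpa using len_le_of_none (ofList_single_succ b 0)
  · refine le_len fun n hn => ?_
    have hn0 : n ≠ 0 := by
      intro h; rw [h, ofList_single_zero] at hn; exact nomatch hn
    exact_mod_cast Nat.one_le_iff_ne_zero.2 hn0

theorem eq_single_of_len_one {x : ℕ → Option A} (hx : x ∈ FullShift A) (h : len x = 1) :
    ∃ b, x = ofList [b] := by
  have h0 : x 0 ≠ none := by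
    intro h0
    have h2 : len x ≤ ((0 : ℕ) : ℕ∞) := len_le_of_none h0
    rw [h] at h2
    simp at h2
  have h1 : x 1 = none := by
    by_contra h1
    have h2 : (2 : ℕ∞) ≤ len x := by
      refine le_len fun n hn => ?_
      have hn2 : 2 ≤ n := by
        rcases n with _ | _ | n
        · exact absurd hn h0
        · exact absurd hn h1
        · omega
      exact_mod_cast hn2
    rw [h] at h2
    norm_num at h2
  have hall : ∀ n, x (n + 1) = none := by
    intro n
    induction n with
    | zero => exact h1
    | succ k ih => exact hx _ ih
  obtain ⟨b, hb⟩ := Option.ne_none_iff_exists'.1 h0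
  refine ⟨b, funext fun n => ?_⟩
  rcases n with _ | n
  · rw [hb, ofList_single_zero]
  · rw [hall n, ofList_single_succ]

theorem exists_finset_of_open {b : A} {U : Set ↥(FullShift A)} (hU : IsOpen U)
    (hb : (⟨ofList [b], ofList_mem _⟩ : ↥(FullShift A)) ∈ U) :
    ∃ S : Finset A, ∀ c ∉ S, (⟨zraw b c, zraw_mem b c⟩ : ↥(FullShift A)) ∈ U := by
  classical
  have hU' : TopologicalSpace.GenerateOpen
      {S | ∃ w F, S = Subtype.val ⁻¹' Cyl w F} U := hU
  clear hU
  revert hb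
  induction hU' with
  | basic s hs =>
    obtain ⟨w, F, rfl⟩ := hs
    intro hb
    obtain ⟨hpre, hF⟩ := hb
    have hwlen : w.length ≤ 1 := by
      by_contra hlen
      have h2 : (none : Option A) = some (w.get ⟨1, by omega⟩) := hpre 1 (by omega)
      exact nomatch h2
    rcases w with _ | ⟨x, _ | ⟨y, t⟩⟩
    · refine ⟨∅, fun c _ => ⟨fun i hi => absurd hi (Nat.not_lt_zero i), fun a ha hc => ?_⟩⟩
      exact hF a ha hc
    · have hx : x = b := by
        have h2 : some b = some x := hpre 0 (by simp)
        exact (Option.some.inj h2).symm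
      subst hx
      refine ⟨F, fun c hcF => ⟨fun i hi => ?_, fun a ha h2 => ?_⟩⟩
      · have hi0 : i = 0 := by simpa using hi
        subst hi0
        rfl
      · have hca : c = a := Option.some.inj h2
        subst hca
        exact hcF ha
    · exact absurd hwlen (by simp)
  | univ => exact fun _ => ⟨∅, fun c _ => trivial⟩
  | inter s t hs ht ihs iht =>
    intro hb
    obtain ⟨S1, h1⟩ := ihs hb.1
    obtain ⟨S2, h2⟩ := iht hb.2
    exact ⟨S1 ∪ S2, fun c hc =>
      ⟨h1 c fun h => hc (Finset.mem_union_left _ h),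
       h2 c fun h => hc (Finset.mem_union_right _ h)⟩⟩
  | sUnion T hT ih =>
    intro hb
    obtain ⟨t, ht, hbt⟩ := hb
    obtain ⟨S, hS⟩ := ih t ht hbt
    exact ⟨S, fun c hc => Set.mem_sUnion.2 ⟨t, ht, hS c hc⟩⟩

theorem edge_adj {V E : Type*} (G : DirGraph V E) {x : ↥(FullShift E)}
    (hx : x ∈ edgeShift G.toUltragraph) {e g : E}
    (h0 : x.1 0 = some e) (h1 : x.1 1 = some g) : G.s g = G.r e := by
  have hopen : IsOpen (Subtype.val ⁻¹' Cyl [e, g] (∅ : Finset E) : Set ↥(FullShift E)) :=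
    TopologicalSpace.GenerateOpen.basic _ ⟨[e, g], ∅, rfl⟩
  have hmem : x ∈ Subtype.val ⁻¹' Cyl [e, g] (∅ : Finset E) := by
    refine ⟨fun i hi => ?_, fun a ha => absurd ha (Finset.notMem_empty a)⟩
    rcases i with _ | _ | i
    · exact h0
    · exact h1
    · simp only [List.length_cons, List.length_nil] at hi
      omega
  obtain ⟨y, hyO, hyG⟩ := mem_closure_iff.1 hx _ hopen hmem
  have hy0 : y.1 0 = some e := hyO.1 0 (by norm_num)
  have hy1 : y.1 1 = some g := hyO.1 1 (by norm_num)
  have h3 := hyG.2 0 e g hy0 hy1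
  simpa [DirGraph.toUltragraph] using h3

theorem zraw_mem_XF {Fw : Set (List A)} (hne : [] ∉ Fw) {b c : A} (hb : [b] ∉ Fw)
    (hc : ∀ w ∈ Fw, c ∉ w) : zraw b c ∈ XF Fw := by
  left
  refine ⟨zraw_isInf b c, fun w hw k hblk => ?_⟩
  rcases w with _ | ⟨x, _ | ⟨y, t⟩⟩
  · exact hne hw
  · have h2 := hblk 0 (by simp)
    rcases Nat.eq_zero_or_pos k with hk | hk
    · subst hk
      have hxb : b = x := Option.some.inj h2
      subst hxb
      exact hb hw
    · have hzc : zraw b c k = some c := by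
        simp only [zraw, if_neg (by omega : ¬ k = 0)]
      rw [Nat.add_zero, hzc] at h2
      have hcx : c = x := Option.some.inj h2
      exact hc _ hw (by rw [hcx]; simp)
  · have h2 := hblk 1 (by simp)
    have hcy : c = y := Option.some.inj h2
    exact hc _ hw (by rw [hcy]; simp)

theorem single_not_forbidden {Fw : Set (List A)} {x : ℕ → Option A} (hx : x ∈ XF Fw)
    {a : A} (hxa : x = ofList [a]) : [a] ∉ Fw := by
  intro hmem
  rcases hx with hx | hx
  · have h1 := hx.1 1
    rw [hxa, ofList_single_succ] at h1
    exact h1 rfl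
  · obtain ⟨w, hw, hinf⟩ := hx
    have hwa : w = [a] := ofList_injective (by rw [← hw, hxa])
    subst hwa
    obtain ⟨a0, y, hy⟩ := hinf.nonempty
    refine hy.2 [a] hmem 0 fun i hi => ?_
    have hi0 : i = 0 := by simpa using hi
    subst hi0
    simp [listCat]

theorem first_letter {A V E : Type*}
    (Fw : Set (List A)) (G : DirGraph V E)
    (phi : ↥{x : ↥(FullShift A) | x.1 ∈ XF Fw} → ↥(edgeShift G.toUltragraph))
    (hphi : IsConjugacy {x : ↥(FullShift A) | x.1 ∈ XF Fw} (edgeShift G.toUltragraph) phi)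
    {b : A} {f : E} (v : ↥{x : ↥(FullShift A) | x.1 ∈ XF Fw})
    (hv : v.1.1 = ofList [b]) (hphiv : (phi v).1.1 = ofList [f]) :
    ∃ S : Finset A, ∀ c ∉ S,
      ∀ hc : (⟨zraw b c, zraw_mem b c⟩ : ↥(FullShift A)) ∈
          {x : ↥(FullShift A) | x.1 ∈ XF Fw},
        (phi ⟨⟨zraw b c, zraw_mem b c⟩, hc⟩).1.1 0 = some f := by
  have hUEopen : IsOpen (Subtype.val ⁻¹' Cyl [f] (∅ : Finset E) : Set ↥(FullShift E)) :=
    TopologicalSpace.GenerateOpen.basic _ ⟨[f], ∅, rfl⟩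
  have hcont : IsOpen (phi ⁻¹' (Subtype.val ⁻¹' (Subtype.val ⁻¹' Cyl [f] (∅ : Finset E)))) :=
    hphi.continuous.isOpen_preimage _ (hUEopen.preimage continuous_subtype_val)
  obtain ⟨U, hUopen, hUeq⟩ := isOpen_induced_iff.1 hcont
  have hbU : (⟨ofList [b], ofList_mem _⟩ : ↥(FullShift A)) ∈ U := by
    have hvmem : v ∈ phi ⁻¹' (Subtype.val ⁻¹' (Subtype.val ⁻¹' Cyl [f] (∅ : Finset E))) := by
      refine ⟨fun i hi => ?_, fun a ha => absurd ha (Finset.notMem_empty a)⟩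
      have hi0 : i = 0 := by simpa using hi
      subst hi0
      rw [hphiv, ofList_single_zero]
      rfl
    rw [← hUeq] at hvmem
    have hvU : v.1 ∈ U := hvmem
    rwa [show v.1 = (⟨ofList [b], ofList_mem _⟩ : ↥(FullShift A)) from Subtype.ext hv] at hvU
  obtain ⟨S, hS⟩ := exists_finset_of_open hUopen hbU
  refine ⟨S, fun c hcS hc => ?_⟩
  have hz : (⟨⟨zraw b c, zraw_mem b c⟩, hc⟩ : ↥{x : ↥(FullShift A) | x.1 ∈ XF Fw}) ∈
      phi ⁻¹' (Subtype.val ⁻¹' (Subtype.val ⁻¹' Cyl [f] (∅ : Finset E))) := by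
    rw [← hUeq]
    exact hS c hcS
  exact hz.1 0 (by simp)

end AuxProof

/-- if a shift of finite type over an infinite alphabet is conjugate to the
edge shift of a graph, then all length-one elements of the edge shift have the same range. -/
theorem ranges_eq_of_conjugacy {A V E : Type*} [Countable A] [Infinite A]
    [Countable V] [Countable E]
    (Fw : Set (List A)) (hFw : Fw.Finite) (hne : [] ∉ Fw) (G : DirGraph V E)
    (phi : ↥{x : ↥(FullShift A) | x.1 ∈ XF Fw} → ↥(edgeShift G.toUltragraph))
    (hphi : IsConjugacy {x : ↥(FullShift A) | x.1 ∈ XF Fw} (edgeShift G.toUltragraph) phi) :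
    ∀ e f : E, word1 e ∈ edgeShift G.toUltragraph → word1 f ∈ edgeShift G.toUltragraph →
      G.r e = G.r f := by
  intro e f he hf
  obtain ⟨u, hu⟩ := hphi.bijective.2 ⟨word1 e, he⟩
  obtain ⟨v, hv⟩ := hphi.bijective.2 ⟨word1 f, hf⟩
  classical
  have hphiu : (phi u).1.1 = ofList [e] := by rw [hu]; rfl
  have hphiv : (phi v).1.1 = ofList [f] := by rw [hv]; rfl
  have hlu : len u.1.1 = 1 := by
    have h1 := hphi.len_eq u
    rw [hphiu, len_ofList_single] at h1
    exact h1.symm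
  have hlv : len v.1.1 = 1 := by
    have h1 := hphi.len_eq v
    rw [hphiv, len_ofList_single] at h1
    exact h1.symm
  obtain ⟨a, hua⟩ := eq_single_of_len_one u.1.2 hlu
  obtain ⟨b, hvb⟩ := eq_single_of_len_one v.1.2 hlv
  obtain ⟨Sa, hSa⟩ := first_letter Fw G phi hphi u hua hphiu
  obtain ⟨Sb, hSb⟩ := first_letter Fw G phi hphi v hvb hphiv
  have haFw : [a] ∉ Fw := single_not_forbidden u.2 hua
  have hbFw : [b] ∉ Fw := single_not_forbidden v.2 hvb
  have hbad : {c : A | ∃ w ∈ Fw, c ∈ w}.Finite := by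
    have hset : {c : A | ∃ w ∈ Fw, c ∈ w} = ⋃ w ∈ Fw, {c | c ∈ w} := by ext; simp
    rw [hset]
    exact hFw.biUnion fun w _ => w.finite_toSet
  obtain ⟨c, hcmem⟩ :=
    ((hbad.union ((Sa ∪ Sb : Finset A) : Set A).toFinite).infinite_compl).nonempty
  have hcC : ∀ w ∈ Fw, c ∉ w := fun w hw hcw => hcmem (Or.inl ⟨w, hw, hcw⟩)
  have hcS : c ∉ ((Sa ∪ Sb : Finset A) : Set A) := fun h => hcmem (Or.inr h)
  have hcSa : c ∉ Sa := fun h => hcS (by simp [h])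
  have hcSb : c ∉ Sb := fun h => hcS (by simp [h])
  have hzXa : (⟨zraw a c, zraw_mem a c⟩ : ↥(FullShift A)) ∈
      {x : ↥(FullShift A) | x.1 ∈ XF Fw} := zraw_mem_XF hne haFw hcC
  have hzXb : (⟨zraw b c, zraw_mem b c⟩ : ↥(FullShift A)) ∈
      {x : ↥(FullShift A) | x.1 ∈ XF Fw} := zraw_mem_XF hne hbFw hcC
  set ζa : ↥{x : ↥(FullShift A) | x.1 ∈ XF Fw} := ⟨⟨zraw a c, zraw_mem a c⟩, hzXa⟩
  set ζb : ↥{x : ↥(FullShift A) | x.1 ∈ XF Fw} := ⟨⟨zraw b c, zraw_mem b c⟩, hzXb⟩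
  have h0a : (phi ζa).1.1 0 = some e := hSa c hcSa hzXa
  have h0b : (phi ζb).1.1 0 = some f := hSb c hcSb hzXb
  have hshift_eq : (⟨shiftMap ζa.1, hphi.shiftInvX ζa⟩ :
      ↥{x : ↥(FullShift A) | x.1 ∈ XF Fw}) = ⟨shiftMap ζb.1, hphi.shiftInvX ζb⟩ := by
    apply Subtype.ext
    apply Subtype.ext
    funext n
    rfl
  have htails : shiftMap (phi ζa).1 = shiftMap (phi ζb).1 := by
    rw [← hphi.shift_comm ζa, ← hphi.shift_comm ζb, hshift_eq]
  have htail : ∀ n, (phi ζa).1.1 (n + 1) = (phi ζb).1.1 (n + 1) := fun n =>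
    congrFun (congrArg Subtype.val htails) n
  have hinfb : IsInf (phi ζb).1.1 := len_eq_top_iff.1 (by
    rw [hphi.len_eq ζb]
    exact len_eq_top_iff.2 (zraw_isInf b c))
  obtain ⟨g, hg⟩ := Option.ne_none_iff_exists'.1 (hinfb 1)
  have hga : (phi ζa).1.1 1 = some g := by rw [htail 0]; exact hg
  have r1 : G.s g = G.r f := edge_adj G (phi ζb).2 h0b hg
  have r2 : G.s g = G.r e := edge_adj G (phi ζa).2 h0a hga
  rw [← r2, r1]

end OTW
end
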